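/- arXiv:1908.10346 — 2 statements merged into one kernel-verified Lean document; each statement's English description precedes it below -/
import Mathlib

section
/- Let p be an odd prime, β ≥ 2, and 1 ≤ α ≤ β. Let χ₁, χ₂ be Dirichlet characters modulo p^β and let ℓ_{χ₁}, ℓ_{χ₂} ∈ ℤ/p^{β−1}ℤ be their Postnikov parameters, i.e. χᵢ(1+pt) = e_{p^β}(ℓ_{χᵢ} log_p(1+pt)) for all t. Then ℓ_{χ₁} ≡ ℓ_{χ₂} (mod p^{β−α}) if and only if χ₁ · conj(χ₂) factors through (ℤ/p^αℤ)^×, i.e. is induced by a Dirichlet character modulo p^α. -/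
/-!
Write `L(t) = log_p(1 + p t) ∈ ℤ_p` and `c = ℓ₁ - ℓ₂`. By the Postnikov formula,
`χ₁(1 + p t) · conj χ₂(1 + p t) = e_{p^β}(c · L(t))`, which is `1` exactly when
`|c · L(t)| ≤ p^{-β}`. The character `χ₁ · conj χ₂` comes from modulus `p^α` iff it is trivial on `1 + p^α ℤ`, the kernel
of reduction modulo `p^α`. Always `|L(t)| ≤ |p t|`, and for odd `p` the first term of the logarithm
series dominates, so `|L(p^{α-1})| = p^{-α}`; hence triviality on `1 + p^α ℤ` amounts to
`|c| ≤ p^{α-β}`, i.e. `ℓ₁ ≡ ℓ₂ (mod p^{β-α})`.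
-/

/-- `PostnikovParam p β χ ℓχ` says that the Postnikov formula
`χ(1+pt) = e_{p^β}(ℓχ · log_p(1+pt))` holds for every integer `t`, where
`log_p(1+pt)` is expressed through its convergent power series in `ℚ_p` and
`e_{p^β}(y) = e^{2πi (y mod p^β)/p^β}` for `y ∈ ℤ_p`. -/
def PostnikovParam (p β : ℕ) [Fact p.Prime]
    (χ : DirichletCharacter ℂ (p ^ β)) (ℓχ : ZMod (p ^ (β - 1))) : Prop :=
  ∀ (t : ℤ) (y : ℤ_[p]),
    ((y : ℚ_[p]) =
      ∑' n : ℕ, (-1 : ℚ_[p]) ^ n * ((p : ℚ_[p]) * (t : ℚ_[p])) ^ (n + 1) / (n + 1)) →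
    χ ((1 + p * t : ℤ) : ZMod (p ^ β)) =
      Complex.exp (2 * Real.pi * Complex.I *
        ((PadicInt.toZModPow β ((ℓχ.val : ℤ_[p]) * y)).val : ℂ) / ((p : ℂ) ^ β))

theorem padicValNat_add_one_le (p n : ℕ) : padicValNat p (n + 1) ≤ n :=
  Nat.lt_succ_iff.1 ((padicValNat_le_nat_log _).trans_lt (Nat.log_lt_self p n.succ_ne_zero))

theorem padicValNat_add_one_lt {p n : ℕ} (hp : 3 ≤ p) (hn : n ≠ 0) : padicValNat p (n + 1) < n := by
  refine (padicValNat_le_nat_log _).trans_lt (Nat.log_lt_of_lt_pow n.succ_ne_zero ?_)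
  calc n + 1 < 1 + n * 2 := by omega
    _ ≤ 3 ^ n := by exact_mod_cast one_add_mul_le_pow (by norm_num : (-2 : ℤ) ≤ 2) n
    _ ≤ p ^ n := Nat.pow_le_pow_left hp n

theorem mul_zpow_neg_le_zpow_neg_iff {K : Type*} [Field K] [LinearOrder K] [IsStrictOrderedRing K]
    {a b : K} (hb : 0 < b) {m n : ℕ} (hmn : m ≤ n) :
    a * b ^ (-(m : ℤ)) ≤ b ^ (-(n : ℤ)) ↔ a ≤ b ^ (-((n - m : ℕ) : ℤ)) := by
  rw [← le_div_iff₀ (zpow_pos hb _), ← zpow_sub₀ hb.ne', Nat.cast_sub hmn, neg_sub', sub_neg_eq_add,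
    neg_add_eq_sub]

namespace ZMod

theorem exists_eq_intCast_one_add_mul {n d : ℕ} (hd : d ∣ n) {x : ZMod n}
    (hx : castHom hd (ZMod d) x = 1) : ∃ s : ℤ, x = ((1 + d * s : ℤ) : ZMod n) := by
  rw [← intCast_zmod_cast x, map_intCast, ← Int.cast_one, eq_comm,
    intCast_eq_intCast_iff_dvd_sub] at hx
  obtain ⟨s, hs⟩ := hx
  exact ⟨s, by rw [← hs, add_sub_cancel, intCast_zmod_cast]⟩

theorem isUnit_castHom_pow_iff {p α β : ℕ} [Fact p.Prime] (hα : α ≠ 0) (hαβ : α ≤ β)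
    {x : ZMod (p ^ β)} : IsUnit (castHom (pow_dvd_pow p hαβ) (ZMod (p ^ α)) x) ↔ IsUnit x := by
  rw [← natCast_zmod_val x, map_natCast, isUnit_natCast_iff_not_dvd_pow Fact.out (by omega),
    isUnit_natCast_iff_not_dvd_pow Fact.out (by omega)]

theorem castHom_eq_castHom_iff_dvd {n d : ℕ} [NeZero n] (hd : d ∣ n) (a b : ZMod n) :
    castHom hd (ZMod d) a = castHom hd (ZMod d) b ↔ (d : ℤ) ∣ (a.val - b.val : ℤ) := by
  rw [castHom_apply, castHom_apply, cast_eq_val, cast_eq_val, ← Int.cast_natCast,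
    ← Int.cast_natCast (R := ZMod d) b.val, intCast_eq_intCast_iff_dvd_sub, dvd_sub_comm]

end ZMod

namespace DirichletCharacter

variable {R : Type*} [CommMonoidWithZero R] {p α β : ℕ} [Fact p.Prime]

theorem FactorsThrough.exists_apply_eq_castHom {ψ : DirichletCharacter R (p ^ β)} (hα : α ≠ 0)
    (hαβ : α ≤ β) (h : ψ.FactorsThrough (p ^ α)) :
    ∃ χ₀ : DirichletCharacter R (p ^ α),
      ∀ x, ψ x = χ₀ (ZMod.castHom (pow_dvd_pow p hαβ) (ZMod (p ^ α)) x) := by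
  obtain ⟨_, χ₀, rfl⟩ := h
  refine ⟨χ₀, fun x ↦ ?_⟩
  by_cases hx : IsUnit x
  · obtain ⟨u, rfl⟩ := hx
    exact changeLevel_eq_cast_of_dvd χ₀ _ u
  · rw [MulChar.map_nonunit _ hx, MulChar.map_nonunit]
    rwa [ZMod.isUnit_castHom_pow_iff hα hαβ]

theorem exists_apply_eq_castHom_iff (ψ : DirichletCharacter R (p ^ β)) (hα : α ≠ 0)
    (hαβ : α ≤ β) :
    (∃ χ₀ : DirichletCharacter R (p ^ α),
      ∀ x, ψ x = χ₀ (ZMod.castHom (pow_dvd_pow p hαβ) (ZMod (p ^ α)) x)) ↔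
      ∀ s : ℤ, ψ ((1 + p ^ α * s : ℤ) : ZMod (p ^ β)) = 1 := by
  refine ⟨fun ⟨χ₀, hχ₀⟩ s ↦ ?_, fun h ↦ ?_⟩
  · rw [hχ₀, map_intCast]
    push_cast
    simp [← Nat.cast_pow]
  refine FactorsThrough.exists_apply_eq_castHom hα hαβ <|
    (factorsThrough_iff_ker_unitsMap (pow_dvd_pow p hαβ)).2 fun u hu ↦ ?_
  obtain ⟨s, hs⟩ := ZMod.exists_eq_intCast_one_add_mul (pow_dvd_pow p hαβ) (x := u)
    (by simpa [Units.ext_iff, ZMod.unitsMap_val] using hu)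
  rw [MonoidHom.mem_ker, Units.ext_iff, MulChar.coe_toUnitHom, hs]
  simpa using h s

end DirichletCharacter

namespace Padic

variable {p : ℕ} [Fact p.Prime]

noncomputable def logOneAddTerm (x : ℚ_[p]) (n : ℕ) : ℚ_[p] := (-1) ^ n * x ^ (n + 1) / (n + 1)

noncomputable def logOneAdd (x : ℚ_[p]) : ℚ_[p] := ∑' n, logOneAddTerm x n

theorem norm_logOneAddTerm (x : ℚ_[p]) (n : ℕ) :
    ‖logOneAddTerm x n‖ = ‖x‖ ^ (n + 1) * (p : ℝ) ^ padicValNat p (n + 1) := by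
  have hn : ‖((n : ℚ_[p]) + 1)‖ = ((p : ℝ) ^ padicValNat p (n + 1))⁻¹ := by
    rw [← Nat.cast_succ, norm_eq_zpow_neg_valuation (by exact_mod_cast n.succ_ne_zero),
      valuation_natCast, zpow_neg, zpow_natCast]
  rw [logOneAddTerm, norm_div, norm_mul, norm_pow, norm_pow, norm_neg, norm_one, one_pow, one_mul,
    hn, div_inv_eq_mul]

theorem norm_logOneAddTerm_le_mul_zpow {x : ℚ_[p]} (hx : ‖x‖ ≤ (p : ℝ)⁻¹) (n : ℕ) :
    ‖logOneAddTerm x n‖ ≤ ‖x‖ * (p : ℝ) ^ ((padicValNat p (n + 1) : ℤ) - n) := by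
  have hp : (0 : ℝ) < p := by exact_mod_cast (Fact.out : p.Prime).pos
  rw [norm_logOneAddTerm, pow_succ', mul_assoc, zpow_sub₀ hp.ne', zpow_natCast, zpow_natCast,
    div_eq_mul_inv, mul_comm ((p : ℝ) ^ _), ← inv_pow]
  gcongr

theorem norm_logOneAddTerm_le {x : ℚ_[p]} (hx : ‖x‖ ≤ (p : ℝ)⁻¹) (n : ℕ) :
    ‖logOneAddTerm x n‖ ≤ ‖x‖ := by
  refine (norm_logOneAddTerm_le_mul_zpow hx n).trans (mul_le_of_le_one_right (norm_nonneg x) ?_)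
  have := padicValNat_add_one_le p n
  exact zpow_le_one_of_nonpos₀ (by exact_mod_cast (Fact.out : p.Prime).one_le) (by omega)

-- This is where `p` must be odd: for `p = 2` and `‖x‖ = 1/2`, the term `x² / 2` has norm `‖x‖`.
theorem norm_logOneAddTerm_succ_le (hp : p ≠ 2) {x : ℚ_[p]} (hx : ‖x‖ ≤ (p : ℝ)⁻¹) (n : ℕ) :
    ‖logOneAddTerm x (n + 1)‖ ≤ ‖x‖ * (p : ℝ)⁻¹ := by
  have hp3 : 3 ≤ p := by have := (Fact.out : p.Prime).two_le; omega
  refine (norm_logOneAddTerm_le_mul_zpow hx _).trans (mul_le_mul_of_nonneg_left ?_ (norm_nonneg x))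
  rw [← zpow_neg_one]
  have := padicValNat_add_one_lt (n := n + 1) hp3 (by omega)
  exact zpow_le_zpow_right₀ (by exact_mod_cast (Fact.out : p.Prime).one_le) (by omega)

theorem summable_logOneAddTerm {x : ℚ_[p]} (hx : ‖x‖ ≤ (p : ℝ)⁻¹) :
    Summable (logOneAddTerm x) := by
  have hx1 : ‖‖x‖‖ < 1 := by
    rw [norm_norm]
    exact hx.trans_lt (inv_lt_one_of_one_lt₀ (by exact_mod_cast (Fact.out : p.Prime).one_lt))
  refine .of_norm_bounded ((summable_nat_add_iff 1).2
    (hasSum_coe_mul_geometric_of_norm_lt_one hx1).summable) fun n ↦ ?_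
  rw [norm_logOneAddTerm, mul_comm]
  gcongr
  exact_mod_cast Nat.le_of_dvd n.succ_pos pow_padicValNat_dvd

theorem norm_logOneAdd_le {x : ℚ_[p]} (hx : ‖x‖ ≤ (p : ℝ)⁻¹) : ‖logOneAdd x‖ ≤ ‖x‖ :=
  IsUltrametricDist.norm_tsum_le_of_forall_le_of_nonneg (norm_nonneg x) (norm_logOneAddTerm_le hx)

theorem norm_logOneAdd (hp : p ≠ 2) {x : ℚ_[p]} (hx : ‖x‖ ≤ (p : ℝ)⁻¹) : ‖logOneAdd x‖ = ‖x‖ := by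
  rcases eq_or_ne x 0 with rfl | hx0
  · simp [logOneAdd, logOneAddTerm]
  have htail : ‖∑' n, logOneAddTerm x (n + 1)‖ < ‖x‖ := by
    refine (IsUltrametricDist.norm_tsum_le_of_forall_le_of_nonneg (by positivity)
      (norm_logOneAddTerm_succ_le hp hx)).trans_lt (mul_lt_of_lt_one_right (norm_pos_iff.2 hx0) ?_)
    exact inv_lt_one_of_one_lt₀ (by exact_mod_cast (Fact.out : p.Prime).one_lt)
  have hhead : logOneAddTerm x 0 = x := by simp [logOneAddTerm]
  rw [logOneAdd, (summable_logOneAddTerm hx).tsum_eq_zero_add, hhead,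
    IsUltrametricDist.norm_add_eq_max_of_norm_ne_norm htail.ne', max_eq_left htail.le]

theorem norm_p_mul_intCast_le (t : ℤ) : ‖(p : ℚ_[p]) * t‖ ≤ (p : ℝ)⁻¹ := by
  rw [norm_mul, norm_p]
  exact mul_le_of_le_one_right (by positivity) (norm_int_le_one t)

end Padic

namespace PadicInt

variable (p : ℕ) [Fact p.Prime]

noncomputable def logOneAddPMul (t : ℤ) : ℤ_[p] :=
  ⟨Padic.logOneAdd ((p : ℚ_[p]) * t),
    (Padic.norm_logOneAdd_le (Padic.norm_p_mul_intCast_le t)).trans <|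
      (Padic.norm_p_mul_intCast_le t).trans
        (inv_le_one_of_one_le₀ (by exact_mod_cast (Fact.out : p.Prime).one_le))⟩

variable {p}

theorem norm_logOneAddPMul_le (t : ℤ) : ‖logOneAddPMul p t‖ ≤ ‖((p * t : ℤ) : ℤ_[p])‖ := by
  rw [norm_def, norm_def, coe_intCast, Int.cast_mul, Int.cast_natCast]
  exact Padic.norm_logOneAdd_le (Padic.norm_p_mul_intCast_le t)

theorem norm_logOneAddPMul (hp : p ≠ 2) (t : ℤ) :
    ‖logOneAddPMul p t‖ = ‖((p * t : ℤ) : ℤ_[p])‖ := by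
  rw [norm_def, norm_def, coe_intCast, Int.cast_mul, Int.cast_natCast]
  exact Padic.norm_logOneAdd hp (Padic.norm_p_mul_intCast_le t)

theorem toZModPow_eq_zero_iff (n : ℕ) (x : ℤ_[p]) :
    toZModPow n x = 0 ↔ ‖x‖ ≤ (p : ℝ) ^ (-(n : ℤ)) := by
  rw [← RingHom.mem_ker, ker_toZModPow, norm_le_pow_iff_mem_span_pow]

end PadicInt

open PadicInt in
theorem PostnikovParam.apply_one_add_mul {p β : ℕ} [Fact p.Prime] {χ : DirichletCharacter ℂ (p ^ β)}
    {ℓ : ZMod (p ^ (β - 1))} (h : PostnikovParam p β χ ℓ) (t : ℤ) :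
    χ ((1 + p * t : ℤ) : ZMod (p ^ β)) =
      ZMod.stdAddChar (toZModPow β ((ℓ.val : ℤ_[p]) * logOneAddPMul p t)) := by
  rw [h t (logOneAddPMul p t) rfl, ZMod.stdAddChar_apply, ZMod.toCircle_apply]
  push_cast
  rfl

open PadicInt in
theorem PostnikovParam.mul_conj_apply_eq_one_iff {p β : ℕ} [Fact p.Prime]
    {χ₁ χ₂ : DirichletCharacter ℂ (p ^ β)} {ℓ₁ ℓ₂ : ZMod (p ^ (β - 1))}
    (h₁ : PostnikovParam p β χ₁ ℓ₁) (h₂ : PostnikovParam p β χ₂ ℓ₂) (t : ℤ) :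
    χ₁ ((1 + p * t : ℤ) : ZMod (p ^ β)) * starRingEnd ℂ (χ₂ ((1 + p * t : ℤ) : ZMod (p ^ β))) = 1 ↔
      ‖((ℓ₁.val - ℓ₂.val : ℤ) : ℤ_[p]) * logOneAddPMul p t‖ ≤ (p : ℝ) ^ (-(β : ℤ)) := by
  rw [h₁.apply_one_add_mul, h₂.apply_one_add_mul, ← AddChar.map_neg_eq_conj,
    ← AddChar.map_add_eq_mul, ← map_neg, ← map_add,
    ← AddChar.map_zero_eq_one (ZMod.stdAddChar (N := p ^ β)), ZMod.injective_stdAddChar.eq_iff,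
    toZModPow_eq_zero_iff]
  push_cast
  ring_nf

/-- For `p` odd, `β ≥ 2`, `1 ≤ α ≤ β`: the Postnikov parameters of `χ₁, χ₂` agree
modulo `p^{β-α}` iff `χ₁ ⋅ conj(χ₂)` is induced by a character modulo `p^α`. -/
theorem stmt_7 (p : ℕ) [Fact p.Prime] (hodd : Odd p) (β α : ℕ)
    (hα : 1 ≤ α) (hαβ : α ≤ β)
    (χ₁ χ₂ : DirichletCharacter ℂ (p ^ β)) (ℓ₁ ℓ₂ : ZMod (p ^ (β - 1)))
    (h₁ : PostnikovParam p β χ₁ ℓ₁) (h₂ : PostnikovParam p β χ₂ ℓ₂) :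
    ZMod.castHom (pow_dvd_pow p (by omega : β - α ≤ β - 1)) (ZMod (p ^ (β - α))) ℓ₁
      = ZMod.castHom (pow_dvd_pow p (by omega : β - α ≤ β - 1)) (ZMod (p ^ (β - α))) ℓ₂
    ↔ ∃ χ₀ : DirichletCharacter ℂ (p ^ α),
        ∀ x : ZMod (p ^ β),
          χ₁ x * (starRingEnd ℂ) (χ₂ x)
            = χ₀ (ZMod.castHom (pow_dvd_pow p hαβ) (ZMod (p ^ α)) x) := by
  have hp : p ≠ 2 := hodd.ne_two_of_dvd_nat dvd_rfl
  have hp0 : (0 : ℝ) < p := by exact_mod_cast (Fact.out : p.Prime).pos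
  have hpow (s : ℤ) : (p : ℤ) ^ α * s = p * (p ^ (α - 1) * s) := by
    rw [← mul_assoc, ← pow_succ', Nat.sub_add_cancel hα]
  have hψ := (χ₁ * χ₂.ringHomComp (starRingEnd ℂ)).exists_apply_eq_castHom_iff (by omega) hαβ
  simp only [MulChar.mul_apply, MulChar.ringHomComp_apply] at hψ
  rw [hψ, ZMod.castHom_eq_castHom_iff_dvd, Nat.cast_pow, ← PadicInt.norm_int_le_pow_iff_dvd]
  simp_rw [hpow, h₁.mul_conj_apply_eq_one_iff h₂, norm_mul]
  constructor
  · intro hc s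
    have hL : ‖PadicInt.logOneAddPMul p (p ^ (α - 1) * s)‖ ≤ (p : ℝ) ^ (-(α : ℤ)) :=
      (PadicInt.norm_logOneAddPMul_le _).trans
        (PadicInt.norm_int_le_pow_iff_dvd.2 ⟨s, (hpow s).symm⟩)
    exact (mul_le_mul_of_nonneg_left hL (norm_nonneg _)).trans
      ((mul_zpow_neg_le_zpow_neg_iff hp0 hαβ).2 hc)
  · intro h
    have := h 1
    rw [PadicInt.norm_logOneAddPMul hp, ← hpow, mul_one, Int.cast_pow, Int.cast_natCast,
      PadicInt.norm_p_pow] at this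
    exact (mul_zpow_neg_le_zpow_neg_iff hp0 hαβ).1 this
end

section
/- Let χ be a Dirichlet character modulo q induced by the primitive character χ′ modulo q′ (allowing q′ = 1, the trivial character). Then for every integer n ≥ 1, the Gauss sum τ(χ, n) = Σ_{x mod q} χ(x) e_q(n x) satisfies |τ(χ, n)| ≤ (q′)^{1/2} · gcd(n, q/q′). -/
/-!
Write `q = q' r`, `g = gcd(n, r)`, `n = g n₁`, `r = g h`, `m = q' h`, and let `χ_m` be the
character mod `m` induced by `χ'`. Since `e_q(n x) = e_m(n₁ x)` only depends on `x mod m`, summing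
over the fibres of `(ℤ/q)ˣ → (ℤ/m)ˣ` gives `τ(χ, n) = K τ(χ_m, n₁)`, where `K ≤ q/m = g` is the
order of the kernel. As `gcd(n₁, h) = 1`, expanding the coprimality-to-`h` condition hidden in `χ_m`
with the Möbius function leaves a single term, `τ(χ_m, n₁) = μ(h) χ'(h) τ(χ', n₁)`, and
`|τ(χ', n₁)| ≤ √q'` since `χ'` is primitive.
-/

open Complex ZMod Finset
open scoped ArithmeticFunction.Moebius

lemma MulChar.sum_mul_eq_sum_units {R R' : Type*} [CommMonoid R] [Fintype R] [DecidableEq R]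
    [CommSemiring R'] (χ : MulChar R R') (f : R → R') :
    ∑ x, χ x * f x = ∑ u : Rˣ, χ u * f u := by
  symm
  refine (sum_map univ ⟨Units.val, Units.val_injective⟩ (fun x => χ x * f x)).symm.trans
    (sum_subset (subset_univ _) fun x _ hx => ?_)
  have : ¬IsUnit x := fun ⟨u, hu⟩ => hx (mem_map.mpr ⟨u, mem_univ _, hu⟩)
  rw [χ.map_nonunit this, zero_mul]

lemma MonoidHom.sum_comp_of_surjective {G H M : Type*} [Group G] [Group H] [Fintype G]
    [Fintype H] [AddCommMonoid M] (f : G →* H) (hf : Function.Surjective f) (F : H → M) :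
    ∑ g, F (f g) = Nat.card f.ker • ∑ y, F y := by
  classical
  have hfib (y : H) : #{g | f g = y} = Nat.card f.ker := by
    rw [MonoidHom.card_fiber_eq_of_mem_range f (hf y) ⟨1, map_one f⟩, Nat.card_eq_fintype_card,
      Fintype.card_subtype]
    simp only [MonoidHom.mem_ker]
  rw [sum_comp, image_univ_of_surjective hf, smul_sum]
  simp_rw [hfib]

lemma Fintype.sum_eq_zero_of_add_eq_mul {G R : Type*} [AddGroup G] [Fintype G] [Ring R]
    [IsDomain R] (f : G → R) (c : G) {ω : R} (hω : ω ≠ 1) (hf : ∀ y, f (y + c) = ω * f y) :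
    ∑ y, f y = 0 := by
  have h : ∑ y, f y = ω * ∑ y, f y := by
    rw [mul_sum, ← Equiv.sum_comp (Equiv.addRight c) f]
    exact Finset.sum_congr rfl fun y _ => hf y
  by_contra hS
  exact hω (mul_right_cancel₀ hS (h.symm.trans (one_mul _).symm))

lemma ArithmeticFunction.sum_divisors_moebius {R : Type*} [Ring R] (n : ℕ) :
    ∑ d ∈ n.divisors, (μ d : R) = if n = 1 then 1 else 0 := by
  have := congr_arg (· n) (coe_moebius_mul_coe_zeta (R := R))
  simpa only [coe_mul_zeta_apply, intCoe_apply, one_apply] using this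

lemma ArithmeticFunction.sum_divisors_filter_dvd_moebius {R : Type*} [Ring R] {h : ℕ}
    (hh : h ≠ 0) (n : ℕ) :
    ∑ d ∈ h.divisors with d ∣ n, (μ d : R) = if n.Coprime h then 1 else 0 := by
  have : {d ∈ h.divisors | d ∣ n} = (n.gcd h).divisors := by
    ext d
    simp [Nat.dvd_gcd_iff, hh, and_comm]
  rw [this, sum_divisors_moebius]

namespace ZMod

lemma card_ker_castHom {m q : ℕ} [NeZero q] (hmq : m ∣ q) :
    Nat.card (castHom hmq (ZMod m)).toAddMonoidHom.ker = q / m := by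
  have hm : 0 < m := Nat.pos_of_dvd_of_pos hmq (Nat.pos_of_neZero q)
  have := AddSubgroup.card_mul_index (castHom hmq (ZMod m)).toAddMonoidHom.ker
  rw [AddSubgroup.index_ker, AddMonoidHom.range_eq_top.mpr (ringHom_surjective _),
    Nat.card_zmod, AddSubgroup.card_top, Nat.card_zmod] at this
  exact Nat.eq_div_of_mul_eq_left hm.ne' this

lemma card_ker_unitsMap_le {m q : ℕ} [NeZero q] (hmq : m ∣ q) :
    Nat.card (unitsMap hmq).ker ≤ q / m := by
  rw [← card_ker_castHom hmq]
  refine Nat.card_le_card_of_injective (fun u => ⟨(u.1 : ZMod q) - 1, ?_⟩) fun u v huv => ?_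
  · have hu := congrArg Units.val (MonoidHom.mem_ker.mp u.2)
    rw [unitsMap_val, Units.val_one] at hu
    rw [AddMonoidHom.mem_ker, RingHom.toAddMonoidHom_eq_coe, AddMonoidHom.coe_coe, map_sub,
      map_one, castHom_apply, hu, sub_self]
  · exact Subtype.ext (Units.ext (sub_left_injective (congrArg Subtype.val huv)))

lemma stdAddChar_div_mul {m q : ℕ} [NeZero q] [NeZero m] (hmq : m ∣ q) (x : ZMod q) :
    stdAddChar (((q / m : ℕ) : ZMod q) * x) = stdAddChar (castHom hmq (ZMod m) x) := by
  obtain ⟨j, rfl⟩ := intCast_surjective x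
  obtain ⟨d, rfl⟩ := hmq
  have hd : (d : ℂ) ≠ 0 := Nat.cast_ne_zero.mpr (right_ne_zero_of_mul (NeZero.ne (m * d)))
  rw [map_intCast, Nat.mul_div_cancel_left _ (Nat.pos_of_neZero m), ← Int.cast_natCast,
    ← Int.cast_mul, stdAddChar_coe, stdAddChar_coe]
  push_cast
  field_simp

section Multiples

variable {q' h : ℕ} [NeZero q'] [NeZero h] (f : ZMod q' → ℂ) (a : ℕ)

/- The shift by `c = d q'` fixes both the condition `d ∣ y` and `y mod q'`, but multiplies the
additive character by `e(a / (h / d)) ≠ 1`. -/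
lemma sum_dvd_val_mul_stdAddChar_eq_zero {d : ℕ} (hdh : d ∣ h) (hd : d ≠ h) (ha : a.Coprime h) :
    ∑ y : ZMod (q' * h), (if d ∣ y.val then
      f (castHom (dvd_mul_right q' h) (ZMod q') y) * stdAddChar ((a : ZMod (q' * h)) * y)
      else 0) = 0 := by
  set c : ZMod (q' * h) := ((d * q' : ℕ) : ZMod (q' * h))
  have hc : c.val = d * q' := by
    refine val_natCast_of_lt ?_
    rw [mul_comm q']
    exact Nat.mul_lt_mul_of_pos_right ((Nat.le_of_dvd (Nat.pos_of_neZero h) hdh).lt_of_ne hd)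
      (Nat.pos_of_neZero q')
  have hω : stdAddChar ((a : ZMod (q' * h)) * c) ≠ 1 := by
    rw [← AddChar.map_zero_eq_one (stdAddChar (N := q' * h)), injective_stdAddChar.ne_iff,
      ← Nat.cast_mul, Ne, natCast_eq_zero_iff, ← mul_assoc, mul_comm (a * d) q']
    intro hdvd
    exact hd (Nat.dvd_antisymm hdh
      (ha.symm.dvd_of_dvd_mul_left (Nat.dvd_of_mul_dvd_mul_left (Nat.pos_of_neZero q') hdvd)))
  refine Fintype.sum_eq_zero_of_add_eq_mul _ c hω fun y => ?_
  have hdvd : d ∣ (y + c).val ↔ d ∣ y.val := by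
    rw [val_add, hc, Nat.dvd_mod_iff (hdh.trans (dvd_mul_left h q')),
      Nat.dvd_add_left (dvd_mul_right d q')]
  have hπ : castHom (dvd_mul_right q' h) (ZMod q') c = 0 := by
    rw [map_natCast, natCast_eq_zero_iff]
    exact dvd_mul_left q' d
  simp only [hdvd, mul_add, AddChar.map_add_eq_mul, map_add, hπ, add_zero]
  split_ifs <;> ring

lemma sum_dvd_val_mul_stdAddChar_eq_self :
    ∑ y : ZMod (q' * h), (if h ∣ y.val then
      f (castHom (dvd_mul_right q' h) (ZMod q') y) * stdAddChar ((a : ZMod (q' * h)) * y)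
      else 0) = ∑ z : ZMod q', f (h * z) * stdAddChar ((a : ZMod q') * z) := by
  have hval (z : ZMod q') : ((h * z.val : ℕ) : ZMod (q' * h)).val = h * z.val :=
    val_natCast_of_lt (by
      rw [mul_comm q']
      exact Nat.mul_lt_mul_of_pos_left z.val_lt (Nat.pos_of_neZero h))
  rw [← sum_filter]
  refine (sum_nbij' (fun z => ((h * z.val : ℕ) : ZMod (q' * h)))
    (fun y => ((y.val / h : ℕ) : ZMod q')) ?_ ?_ ?_ ?_ ?_).symm
  · intro z _
    simp only [mem_filter, mem_univ, true_and]
    rw [hval]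
    exact dvd_mul_right h _
  · intro y _
    exact mem_univ _
  · intro z _
    rw [hval, Nat.mul_div_cancel_left _ (Nat.pos_of_neZero h), natCast_zmod_val]
  · intro y hy
    have hlt : y.val / h < q' := Nat.div_lt_of_lt_mul (y.val_lt.trans_eq (mul_comm q' h))
    simp only [val_natCast_of_lt hlt, Nat.mul_div_cancel' (mem_filter.mp hy).2, natCast_zmod_val]
  · intro z _
    have hq : q' * h / q' = h := Nat.mul_div_cancel_left _ (Nat.pos_of_neZero q')
    have := stdAddChar_div_mul (dvd_mul_right q' h) ((a * z.val : ℕ) : ZMod (q' * h))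
    rw [hq] at this
    simp only [Nat.cast_mul] at this ⊢
    rw [mul_left_comm, this]
    simp only [map_mul, map_natCast, natCast_zmod_val]

end Multiples

end ZMod

namespace DirichletCharacter

lemma IsPrimitive.inv {R : Type*} [CommMonoidWithZero R] {N : ℕ} {χ : DirichletCharacter R N}
    (hχ : χ.IsPrimitive) :
    χ⁻¹.IsPrimitive := by
  rwa [IsPrimitive, conductor_inv]

section Level

variable {N : ℕ} [NeZero N]

lemma sum_mul_exp_eq_gaussSum (χ : DirichletCharacter ℂ N) (n : ℕ) :
    ∑ x : ZMod N, χ x * Complex.exp (2 * Real.pi * Complex.I * n * (x.val : ℂ) / N) =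
      gaussSum χ (stdAddChar.mulShift (n : ZMod N)) := by
  refine sum_congr rfl fun x _ => ?_
  have : (n : ZMod N) * x = ((n * x.val : ℕ) : ZMod N) := by rw [Nat.cast_mul, natCast_zmod_val]
  rw [AddChar.mulShift_apply, this, stdAddChar_apply, toCircle_natCast]
  push_cast
  ring_nf

lemma IsPrimitive.gaussSum_mul_gaussSum_inv {χ : DirichletCharacter ℂ N} (hχ : χ.IsPrimitive) :
    gaussSum χ stdAddChar * gaussSum χ⁻¹ stdAddChar = χ (-1) * N := by
  have h := congr_fun (dft_dft (χ : ZMod N → ℂ)) 1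
  simp_rw [funext hχ.fourierTransform_eq_inv_mul_gaussSum, dft_mul_const,
    dft_comp_neg (fun k => χ⁻¹ k), hχ.inv.fourierTransform_eq_inv_mul_gaussSum] at h
  simpa [mul_comm] using h

lemma IsPrimitive.norm_gaussSum {χ : DirichletCharacter ℂ N} (hχ : χ.IsPrimitive) :
    ‖gaussSum χ stdAddChar‖ = Real.sqrt N := by
  have hstar : star (gaussSum χ stdAddChar) = χ (-1) * gaussSum χ⁻¹ stdAddChar := by
    rw [star_gaussSum_eq, AddChar.inv_mulShift, gaussSum_mulShift_of_isPrimitive _ hχ.inv, inv_inv]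
  have hsq : (‖gaussSum χ stdAddChar‖ : ℂ) ^ 2 = N := by
    rw [← mul_conj', starRingEnd_apply, hstar, mul_left_comm, hχ.gaussSum_mul_gaussSum_inv,
      ← mul_assoc, ← map_mul, neg_one_mul, neg_neg, map_one, one_mul]
  rw [← Real.sqrt_sq (norm_nonneg _)]
  congr 1
  exact_mod_cast hsq

lemma gaussSum_changeLevel_mulShift {m : ℕ} [NeZero m] (hmN : m ∣ N)
    (χ : DirichletCharacter ℂ m) (a : ZMod N) :
    gaussSum (changeLevel hmN χ) (stdAddChar.mulShift (((N / m : ℕ) : ZMod N) * a)) =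
      Nat.card (unitsMap hmN).ker • gaussSum χ (stdAddChar.mulShift (castHom hmN (ZMod m) a)) := by
  simp only [gaussSum, AddChar.mulShift_apply]
  rw [MulChar.sum_mul_eq_sum_units, MulChar.sum_mul_eq_sum_units χ,
    ← MonoidHom.sum_comp_of_surjective _ (unitsMap_surjective hmN)]
  refine sum_congr rfl fun u _ => ?_
  rw [changeLevel_eq_cast_of_dvd, mul_assoc, stdAddChar_div_mul hmN, map_mul, unitsMap_val]
  rfl

end Level

section Coprime

variable {q' h : ℕ} [NeZero q'] [NeZero h]

lemma changeLevel_mul_apply (χ : DirichletCharacter ℂ q') (y : ZMod (q' * h)) :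
    changeLevel (dvd_mul_right q' h) χ y =
      if y.val.Coprime h then χ (castHom (dvd_mul_right q' h) (ZMod q') y) else 0 := by
  have hy : IsUnit y ↔ y.val.Coprime q' ∧ y.val.Coprime h := by
    rw [← Nat.coprime_mul_iff_right, ← isUnit_iff_coprime, natCast_zmod_val]
  split_ifs with hh
  · by_cases hu : IsUnit y
    · rw [← hu.unit_spec, changeLevel_eq_cast_of_dvd]
      rfl
    · have : ¬IsUnit (castHom (dvd_mul_right q' h) (ZMod q') y) := by
        rw [castHom_apply, cast_eq_val, isUnit_iff_coprime]
        exact fun hc => hu (hy.mpr ⟨hc, hh⟩)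
      rw [MulChar.map_nonunit _ hu, MulChar.map_nonunit _ this]
  · exact MulChar.map_nonunit _ fun hu => hh (hy.mp hu).2

lemma gaussSum_changeLevel_mul_mulShift_of_coprime (χ : DirichletCharacter ℂ q') {a : ℕ}
    (ha : a.Coprime h) :
    gaussSum (changeLevel (dvd_mul_right q' h) χ) (stdAddChar.mulShift (a : ZMod (q' * h))) =
      μ h * χ h * gaussSum χ (stdAddChar.mulShift (a : ZMod q')) := by
  let S (d : ℕ) : ℂ := ∑ y : ZMod (q' * h), if d ∣ y.val then
      χ (castHom (dvd_mul_right q' h) (ZMod q') y) * stdAddChar ((a : ZMod (q' * h)) * y)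
      else 0
  simp only [gaussSum, AddChar.mulShift_apply]
  calc ∑ y, changeLevel (dvd_mul_right q' h) χ y * stdAddChar ((a : ZMod (q' * h)) * y)
      = ∑ d ∈ h.divisors, μ d * S d := by
        simp only [S, mul_sum]
        rw [sum_comm]
        refine sum_congr rfl fun y _ => ?_
        rw [changeLevel_mul_apply, ← mul_boole,
          ← ArithmeticFunction.sum_divisors_filter_dvd_moebius (NeZero.ne h) y.val, sum_filter,
          mul_sum, sum_mul]
        refine sum_congr rfl fun d _ => ?_
        split_ifs <;> ring
    _ = μ h * S h := sum_eq_single_of_mem h (Nat.mem_divisors_self h (NeZero.ne h))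
        fun d hd hdh => by
          simp only [S]
          rw [sum_dvd_val_mul_stdAddChar_eq_zero _ _ (Nat.dvd_of_mem_divisors hd) hdh ha, mul_zero]
    _ = μ h * χ h * ∑ z, χ z * stdAddChar ((a : ZMod q') * z) := by
      simp only [S]
      rw [sum_dvd_val_mul_stdAddChar_eq_self]
      simp only [map_mul, mul_sum, mul_assoc]

lemma IsPrimitive.norm_gaussSum_changeLevel_mul_mulShift_le {χ : DirichletCharacter ℂ q'}
    (hχ : χ.IsPrimitive) {a : ℕ} (ha : a.Coprime h) :
    ‖gaussSum (changeLevel (dvd_mul_right q' h) χ) (stdAddChar.mulShift (a : ZMod (q' * h)))‖ ≤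
      Real.sqrt q' := by
  rw [gaussSum_changeLevel_mul_mulShift_of_coprime χ ha, gaussSum_mulShift_of_isPrimitive _ hχ,
    norm_mul, norm_mul, norm_mul, hχ.norm_gaussSum]
  have hμ : ‖(μ h : ℂ)‖ ≤ 1 := by
    rw [norm_intCast]
    exact_mod_cast ArithmeticFunction.abs_moebius_le_one
  calc _ ≤ 1 * 1 * (1 * Real.sqrt q') := by
        gcongr
        exacts [χ.norm_le_one _, χ⁻¹.norm_le_one _]
    _ = Real.sqrt q' := by ring

end Coprime

end DirichletCharacter

theorem stmt_10_general (q q' : ℕ) [NeZero q] (hdvd : q' ∣ q)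
    (χ' : DirichletCharacter ℂ q') (hprim : χ'.IsPrimitive)
    (χ : DirichletCharacter ℂ q) (hind : χ = DirichletCharacter.changeLevel hdvd χ')
    (n : ℕ) :
    ‖∑ x : ZMod q,
        χ x * Complex.exp (2 * Real.pi * Complex.I * (n : ℂ) * ((x.val : ℕ) : ℂ) / (q : ℂ))‖
      ≤ Real.sqrt q' * (Nat.gcd n (q / q')) := by
  subst hind
  have : NeZero q' := ⟨ne_zero_of_dvd_ne_zero (NeZero.ne q) hdvd⟩
  set g := n.gcd (q / q')
  set h := q / q' / g
  set n₁ := n / g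
  have hg : 0 < g := Nat.gcd_pos_of_pos_right _ (Nat.div_pos (Nat.le_of_dvd
    (Nat.pos_of_neZero q) hdvd) (Nat.pos_of_neZero q'))
  have hrh : q / q' = g * h := (Nat.mul_div_cancel' (Nat.gcd_dvd_right _ _)).symm
  have hq : q = g * (q' * h) := by rw [← Nat.mul_div_cancel' hdvd, hrh]; ring
  have : NeZero h := ⟨right_ne_zero_of_mul (right_ne_zero_of_mul (hq ▸ NeZero.ne q))⟩
  have hmq : q' * h ∣ q := Dvd.intro_left g hq.symm
  have hqm : q / (q' * h) = g := by rw [hq, Nat.mul_div_cancel _ (Nat.pos_of_neZero _)]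
  have hn : (n : ZMod q) = ((q / (q' * h) : ℕ) : ZMod q) * (n₁ : ZMod q) := by
    rw [hqm, ← Nat.cast_mul, Nat.mul_div_cancel' (Nat.gcd_dvd_left _ _)]
  rw [DirichletCharacter.sum_mul_exp_eq_gaussSum,
    DirichletCharacter.changeLevel_trans χ' (dvd_mul_right q' h) hmq, hn,
    DirichletCharacter.gaussSum_changeLevel_mulShift hmq, map_natCast, nsmul_eq_mul, norm_mul,
    Complex.norm_natCast, mul_comm]
  exact mul_le_mul
    (hprim.norm_gaussSum_changeLevel_mul_mulShift_le (Nat.coprime_div_gcd_div_gcd hg))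
    (by exact_mod_cast (ZMod.card_ker_unitsMap_le hmq).trans_eq hqm) (Nat.cast_nonneg _)
    (Real.sqrt_nonneg _)

/-- Bound for the Gauss sum of a (possibly imprimitive) Dirichlet character:
if `χ` mod `q` is induced by the primitive character `χ′` mod `q′`, then
`|τ(χ,n)| ≤ √(q′) · gcd(n, q/q′)`. -/
theorem stmt_10 (q q' : ℕ) [NeZero q] (hdvd : q' ∣ q)
    (χ' : DirichletCharacter ℂ q') (hprim : χ'.IsPrimitive)
    (χ : DirichletCharacter ℂ q) (hind : χ = DirichletCharacter.changeLevel hdvd χ')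
    (n : ℕ) (hn : 1 ≤ n) :
    ‖∑ x : ZMod q,
        χ x * Complex.exp (2 * Real.pi * Complex.I * (n : ℂ) * ((x.val : ℕ) : ℂ) / (q : ℂ))‖
      ≤ Real.sqrt q' * (Nat.gcd n (q / q')) :=
  stmt_10_general q q' hdvd χ' hprim χ hind n
end
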